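/- For every integer k ≥ 3, the maximum value of a feasible half-integer multiflow on the instance (G_k, H_k) with all supply edge capacities equal to 1 is exactly k/2. -/

import Mathlib

open scoped Classical

/-- `H` is a minor of `G`: there are disjoint nonempty connected branch sets in `G`,
one for each vertex of `H`, with an edge of `G` between the branch sets of any two
vertices adjacent in `H`. -/
def SimpleGraph.HasMinor {V : Type*} {W : Type*} (G : SimpleGraph V) (H : SimpleGraph W) : Prop :=
  ∃ φ : W → Set V,
    (∀ w, (φ w).Nonempty) ∧
    (∀ w, (G.induce (φ w)).Connected) ∧
    (∀ w₁ w₂, w₁ ≠ w₂ → Disjoint (φ w₁) (φ w₂)) ∧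
    (∀ w₁ w₂, H.Adj w₁ w₂ → ∃ v₁ ∈ φ w₁, ∃ v₂ ∈ φ w₂, G.Adj v₁ v₂)

/-- Planarity, via Wagner's characterisation: a graph is planar iff it has
neither a `K₅` nor a `K₃,₃` minor. -/
def SimpleGraph.IsPlanar {V : Type*} (G : SimpleGraph V) : Prop :=
  ¬ G.HasMinor (⊤ : SimpleGraph (Fin 5)) ∧
    ¬ G.HasMinor (completeBipartiteGraph (Fin 3) (Fin 3))

/-- A flow path for the instance `(G, H)`: a path in the supply graph `G` joining the
two endpoints of a demand edge of `H`. -/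
structure FlowPath {V : Type*} (G H : SimpleGraph V) where
  src : V
  dst : V
  demand : H.Adj src dst
  walk : G.Walk src dst
  isPath : walk.IsPath

/-- The set of (supply) edges used by a flow path. -/
def FlowPath.edges {V : Type*} {G H : SimpleGraph V} (P : FlowPath G H) : Set (Sym2 V) :=
  {e | e ∈ P.walk.edges}

/-- The demand edge of a flow path. -/
def FlowPath.demandEdge {V : Type*} {G H : SimpleGraph V} (P : FlowPath G H) : Sym2 V :=
  s(P.src, P.dst)

/-- A multiflow `f` is feasible for capacities `c` if it is nonnegative and the total
flow through any supply edge is at most its capacity. -/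
def MultiflowFeasible {V : Type*} (G H : SimpleGraph V) (c : Sym2 V → ℝ)
    (f : FlowPath G H → ℝ) : Prop :=
  (∀ P, 0 ≤ f P) ∧
    ∀ e ∈ G.edgeSet, (∑ᶠ P ∈ {P : FlowPath G H | e ∈ P.edges}, f P) ≤ c e

/-- The value of a multiflow: the total flow on all paths. -/
noncomputable def multiflowValue {V : Type*} {G H : SimpleGraph V}
    (f : FlowPath G H → ℝ) : ℝ :=
  ∑ᶠ P : FlowPath G H, f P

/-- An integer multiflow. -/
def IsIntegerFlow {V : Type*} {G H : SimpleGraph V} (f : FlowPath G H → ℝ) : Prop :=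
  ∀ P, ∃ n : ℤ, f P = n

/-- A half-integer multiflow: every value is an integer multiple of `1/2`. -/
def IsHalfIntegerFlow {V : Type*} {G H : SimpleGraph V} (f : FlowPath G H → ℝ) : Prop :=
  ∀ P, ∃ n : ℤ, f P = n / 2

/-- A multicut: a set of supply edges meeting every path of `𝒫`. -/
def IsMulticut {V : Type*} (G H : SimpleGraph V) (M : Set (Sym2 V)) : Prop :=
  M ⊆ G.edgeSet ∧ ∀ P : FlowPath G H, ∃ e ∈ M, e ∈ P.edges

/-- The capacity of a set of edges. -/
noncomputable def edgeSetCapacity {V : Type*} (c : Sym2 V → ℝ) (M : Set (Sym2 V)) : ℝ :=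
  ∑ᶠ e ∈ M, c e

/-- The set of edges of `E` having exactly one endpoint in `S`. -/
def cutEdges {V : Type*} (E : Set (Sym2 V)) (S : Set V) : Set (Sym2 V) :=
  {e | e ∈ E ∧ ∃ u v, e = s(u, v) ∧ ((u ∈ S ∧ v ∉ S) ∨ (v ∈ S ∧ u ∉ S))}

/-- `S` is the edge set of a circuit of `D` (a connected subgraph with all degrees two). -/
def IsCircuitEdgeSet {W : Type*} (D : SimpleGraph W) (S : Set (Sym2 W)) : Prop :=
  ∃ (w : W) (C : D.Walk w w), C.IsCycle ∧ S = {e | e ∈ C.edges}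

/-- `C` is a cut of the graph `G`. -/
def IsGraphCut {V : Type*} (G : SimpleGraph V) (C : Set (Sym2 V)) : Prop :=
  ∃ S : Set V, C = cutEdges G.edgeSet S

/-- `C` is an inclusionwise minimal nonempty cut of `G`. -/
def IsMinimalCut {V : Type*} (G : SimpleGraph V) (C : Set (Sym2 V)) : Prop :=
  C.Nonempty ∧ IsGraphCut G C ∧
    ∀ C', C'.Nonempty → IsGraphCut G C' → C' ⊆ C → C' = C

/-- `Q` is a 2-connector for the demand edges `F'` within the supply edges `E'`:
every demand edge lies on a circuit of `Q ∪ F'`. -/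
def Is2Connector {W : Type*} (E' F' Q : Set (Sym2 W)) : Prop :=
  Q ⊆ E' ∧ ∀ e ∈ F',
    ∃ S, IsCircuitEdgeSet (SimpleGraph.fromEdgeSet (Q ∪ F')) S ∧ e ∈ S

/-- `D` together with the edge correspondence `star` is a planar dual of `G'`
(Whitney's characterisation): `star` is a bijection between the edges of `G'` and
those of `D` under which inclusionwise minimal cuts correspond to circuits and
circuits correspond to inclusionwise minimal cuts. -/
def IsPlanarDual {V W : Type*} (G' : SimpleGraph V) (D : SimpleGraph W)
    (star : Sym2 V → Sym2 W) : Prop :=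
  Set.InjOn star G'.edgeSet ∧ star '' G'.edgeSet = D.edgeSet ∧
    (∀ C ⊆ G'.edgeSet, (IsMinimalCut G' C ↔ IsCircuitEdgeSet D (star '' C))) ∧
    (∀ C ⊆ G'.edgeSet, (IsCircuitEdgeSet G' C ↔ IsMinimalCut D (star '' C)))

/-- A laminar family: any two members are disjoint or one contains the other. -/
def IsLaminar {α : Type*} (𝓛 : Set (Set α)) : Prop :=
  ∀ A ∈ 𝓛, ∀ B ∈ 𝓛, A ⊆ B ∨ B ⊆ A ∨ Disjoint A B

/-- The supply graph `G_k`: vertices `a_i = Sum.inl i`, `b_i = Sum.inr i` (`i : Fin k`,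
0-indexed), with edges `a_i b_i` and `a_i a_{i+1}`, all of capacity `1`. -/
def Gk (k : ℕ) : SimpleGraph (Fin k ⊕ Fin k) :=
  SimpleGraph.fromEdgeSet
    ({e | ∃ i : Fin k, e = s(Sum.inl i, Sum.inr i)} ∪
      {e | ∃ i j : Fin k, (j : ℕ) = (i : ℕ) + 1 ∧ e = s(Sum.inl i, Sum.inl j)})

/-- The demand graph `H_k`: edges `b_i b_{i+1}` and `b_i a_{i+2}`. -/
def Hk (k : ℕ) : SimpleGraph (Fin k ⊕ Fin k) :=
  SimpleGraph.fromEdgeSet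
    ({e | ∃ i j : Fin k, (j : ℕ) = (i : ℕ) + 1 ∧ e = s(Sum.inr i, Sum.inr j)} ∪
      {e | ∃ i j : Fin k, (j : ℕ) = (i : ℕ) + 2 ∧ e = s(Sum.inr i, Sum.inl j)})

/-!
Group the flow paths by their *level* `ℓ`, the smaller vertex index of their demand edge
`b_ℓ b_{ℓ+1}` or `b_ℓ a_{ℓ+2}` (indices from `0`), and let `T_ℓ` be the flow on level `ℓ`.
Every path of level `ℓ` uses the spine edge `a_ℓ a_{ℓ+1}`, so `T_ℓ ≤ 1`; a path of level
`ℓ + 1` uses both `a_{ℓ+1} b_{ℓ+1}` and `a_{ℓ+1} a_{ℓ+2}` and a path of level `ℓ` at least one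
of them, so `T_ℓ + 2 T_{ℓ+1} ≤ 2`. For half-integers these force `∑_{ℓ < k-1} T_ℓ ≤ k/2`, since a
level carrying `1` is preceded by an empty one (fractionally, `T ≡ 2/3` does better).
Conversely, half a unit on every `b_ℓ b_{ℓ+1}` and on `b_0 a_2` loads no supply edge more than
twice.
-/

instance FlowPath.instFinite {V : Type*} [Finite V] (G H : SimpleGraph V) :
    Finite (FlowPath G H) := by
  cases nonempty_fintype V
  refine Finite.of_injective
    (fun P : FlowPath G H => (⟨(P.src, P.dst), ⟨P.walk, P.isPath⟩⟩ : Σ p : V × V, G.Path p.1 p.2))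
    fun P Q h => ?_
  obtain ⟨hends, hwalk⟩ := Sigma.mk.inj_iff.mp h
  cases P; cases Q
  obtain ⟨rfl, rfl⟩ := Prod.mk.inj hends
  cases heq_iff_eq.mp hwalk
  rfl

noncomputable instance FlowPath.instFintype {V : Type*} [Finite V] (G H : SimpleGraph V) :
    Fintype (FlowPath G H) :=
  Fintype.ofFinite _

theorem SimpleGraph.Walk.mem_edges_of_boundary {V : Type*} {G : SimpleGraph V} {S : Set V}
    {e : Sym2 V} (hS : ∀ x y, G.Adj x y → x ∈ S → y ∉ S → s(x, y) = e)
    {u v x y : V} (p : G.Walk u v) (huv : s(u, v) = s(x, y)) (hx : x ∈ S) (hy : y ∉ S) :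
    e ∈ p.edges := by
  have leaving {u v : V} (q : G.Walk u v) (hu : u ∈ S) (hv : v ∉ S) : e ∈ q.edges := by
    obtain ⟨d, hd, hd₁, hd₂⟩ := q.exists_boundary_dart S hu hv
    rw [← hS _ _ d.adj hd₁ hd₂]
    exact List.mem_map_of_mem hd
  rcases Sym2.eq_iff.mp huv with ⟨rfl, rfl⟩ | ⟨rfl, rfl⟩
  · exact leaving p hx hy
  · simpa using leaving p.reverse hx hy

theorem Finset.sum_add_two_nsmul_sum_le {ι M : Type*} [DecidableEq ι] [AddCommMonoid M]
    [PartialOrder M] [IsOrderedAddMonoid M] {f : ι → M} {s t X Y : Finset ι}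
    (hf : ∀ i ∈ X ∪ Y, 0 ≤ f i) (hst : Disjoint s t) (hs : s ⊆ X ∪ Y) (ht : t ⊆ X ∩ Y) :
    ∑ i ∈ s, f i + 2 • ∑ i ∈ t, f i ≤ ∑ i ∈ X, f i + ∑ i ∈ Y, f i := by
  have hinter : X ∩ Y ⊆ X ∪ Y := Finset.inter_subset_union
  calc ∑ i ∈ s, f i + 2 • ∑ i ∈ t, f i = ∑ i ∈ s ∪ t, f i + ∑ i ∈ t, f i := by
        rw [Finset.sum_union hst, two_nsmul, add_assoc]
    _ ≤ ∑ i ∈ X ∪ Y, f i + ∑ i ∈ X ∩ Y, f i := by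
        refine add_le_add ?_ ?_ <;>
          refine Finset.sum_le_sum_of_subset_of_nonneg ?_ fun i hi _ => ?_
        exacts [Finset.union_subset hs (ht.trans hinter), hf i hi, ht, hf i (hinter hi)]
    _ = ∑ i ∈ X, f i + ∑ i ∈ Y, f i := Finset.sum_union_inter

section Multiflow

open Finset

variable {V : Type*} {G H : SimpleGraph V} {c : Sym2 V → ℝ} {f : FlowPath G H → ℝ}

theorem multiflowValue_eq_sum [Finite V] : multiflowValue f = ∑ P, f P :=
  finsum_eq_sum_of_fintype f

theorem MultiflowFeasible.sum_le [Finite V] (hf : MultiflowFeasible G H c f) {e : Sym2 V}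
    (he : e ∈ G.edgeSet) {s : Finset (FlowPath G H)} (hs : ∀ P ∈ s, e ∈ P.edges) :
    ∑ P ∈ s, f P ≤ c e := by
  calc ∑ P ∈ s, f P ≤ ∑ P with e ∈ P.edges, f P :=
        sum_le_sum_of_subset_of_nonneg (fun P hP => by simpa using hs P hP) fun P _ _ => hf.1 P
    _ ≤ c e := by simpa [← finsum_mem_coe_finset] using hf.2 e he

theorem IsHalfIntegerFlow.exists_sum_eq (hf : IsHalfIntegerFlow f) (s : Finset (FlowPath G H)) :
    ∃ n : ℤ, ∑ P ∈ s, f P = n / 2 := by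
  choose n hn using hf
  exact ⟨∑ P ∈ s, n P, by simp [hn, sum_div]⟩

variable {ι : Type*} [Fintype ι]

noncomputable def multiflowOfPaths (w : ℝ) (p : ι → FlowPath G H) (P : FlowPath G H) : ℝ :=
  w * #{i | p i = P}

theorem sum_multiflowOfPaths (w : ℝ) (p : ι → FlowPath G H) (s : Finset (FlowPath G H)) :
    ∑ P ∈ s, multiflowOfPaths w p P = w * #{i | p i ∈ s} := by
  rw [card_eq_sum_card_fiberwise (f := p) (t := s) fun i hi => by simpa using hi, Nat.cast_sum,
    mul_sum]
  refine sum_congr rfl fun P hP => ?_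
  rw [filter_filter, multiflowOfPaths]
  congr 3
  ext i
  simp only [mem_filter, mem_univ, true_and]
  exact ⟨fun h => ⟨h ▸ hP, h⟩, And.right⟩

variable [Finite V]

theorem multiflowValue_multiflowOfPaths (w : ℝ) (p : ι → FlowPath G H) :
    multiflowValue (multiflowOfPaths w p) = w * Fintype.card ι := by
  simp [multiflowValue_eq_sum, sum_multiflowOfPaths]

theorem multiflowFeasible_multiflowOfPaths {w : ℝ} (hw : 0 ≤ w) {p : ι → FlowPath G H}
    (hp : ∀ e ∈ G.edgeSet, w * #{i | e ∈ (p i).edges} ≤ c e) :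
    MultiflowFeasible G H c (multiflowOfPaths w p) := by
  refine ⟨fun P => mul_nonneg hw (Nat.cast_nonneg _), fun e he => ?_⟩
  rw [← coe_filter_univ, finsum_mem_coe_finset, sum_multiflowOfPaths]
  simpa using hp e he

end Multiflow

section HalfIntegerChain

open Finset

theorem sum_range_le_of_le_two_of_add_two_mul_le_four (x : ℕ → ℤ) (n : ℕ)
    (hle : ∀ i < n, x i ≤ 2) (hadj : ∀ i, i + 1 < n → x i + 2 * x (i + 1) ≤ 4) :
    ∑ i ∈ range n, x i ≤ n + 1 := by
  -- a term `2` forces its predecessor to be `≤ 0`; the slack `min (x m) 1` keeps track of this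
  have partial_sum (m : ℕ) (hm : m < n) :
      ∑ i ∈ range (m + 1), x i ≤ m + 1 + min (x m) 1 := by
    induction m with
    | zero => have := hle 0 hm; simp only [zero_add, sum_range_one]; omega
    | succ m ih =>
      have := ih (by omega); have := hle (m + 1) hm; have := hadj m hm
      rw [sum_range_succ]
      push_cast
      omega
  rcases n with _ | m
  · simp
  · have := partial_sum m (by omega)
    push_cast
    omega

theorem sum_range_le_of_isHalfInteger (t : ℕ → ℝ) (n : ℕ) (ht : ∀ i, ∃ m : ℤ, t i = m / 2)
    (hle : ∀ i < n, t i ≤ 1) (hadj : ∀ i, i + 1 < n → t i + 2 * t (i + 1) ≤ 2) :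
    ∑ i ∈ range n, t i ≤ (n + 1) / 2 := by
  choose x hx using ht
  have hsum := sum_range_le_of_le_two_of_add_two_mul_le_four x n
    (fun i hi => by
      have := hle i hi; rw [hx] at this; exact_mod_cast (by linarith : (x i : ℝ) ≤ 2))
    (fun i hi => by
      have := hadj i hi; rw [hx, hx] at this
      exact_mod_cast (by linarith : (x i : ℝ) + 2 * x (i + 1) ≤ 4))
  calc ∑ i ∈ range n, t i = ((∑ i ∈ range n, x i : ℤ) : ℝ) / 2 := by
        simp only [hx, Int.cast_sum, sum_div]
    _ ≤ (n + 1) / 2 := by gcongr; exact_mod_cast hsum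

end HalfIntegerChain

namespace Gk

open Fin.NatCast

variable {k : ℕ}

@[simp] theorem adj_inl_inl {i j : Fin k} :
    (Gk k).Adj (.inl i) (.inl j) ↔ (j : ℕ) = i + 1 ∨ (i : ℕ) = j + 1 := by
  simp only [Gk, SimpleGraph.fromEdgeSet_adj, Set.mem_union, Set.mem_ofPred_eq, Sym2.eq,
    Sym2.rel_iff', Prod.mk.injEq, Sum.inl.injEq, Fin.ext_iff, reduceCtorEq, and_false,
    Prod.swap_prod_mk, false_and, or_self, exists_false, false_or, ne_eq]
  constructor
  · rintro ⟨⟨i', j', h, hc⟩, -⟩; omega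
  · rintro (h | h)
    · exact ⟨⟨i, j, h, .inl ⟨rfl, rfl⟩⟩, by omega⟩
    · exact ⟨⟨j, i, h, .inr ⟨rfl, rfl⟩⟩, by omega⟩

@[simp] theorem adj_inl_inr {i j : Fin k} : (Gk k).Adj (.inl i) (.inr j) ↔ i = j := by
  simp [Gk, eq_comm]

@[simp] theorem adj_inr_inl {i j : Fin k} : (Gk k).Adj (.inr i) (.inl j) ↔ i = j :=
  SimpleGraph.adj_comm _ _ _ |>.trans adj_inl_inr |>.trans eq_comm

@[simp] theorem not_adj_inr_inr {i j : Fin k} : ¬ (Gk k).Adj (.inr i) (.inr j) := by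
  simp [Gk]

def idx : Fin k ⊕ Fin k → ℕ := Sum.elim (↑) (↑)

variable [NeZero k]

-- Indices are read modulo `k` (through the cast `ℕ → Fin k`), hence the bounds below.
def a (i : ℕ) : Fin k ⊕ Fin k := .inl i

def b (i : ℕ) : Fin k ⊕ Fin k := .inr i

@[simp] theorem a_val (i : Fin k) : a i = .inl i := by simp [a]

@[simp] theorem b_val (i : Fin k) : b i = .inr i := by simp [b]

@[simp] theorem a_ne_b (i j : ℕ) : (a i : Fin k ⊕ Fin k) ≠ b j := by simp [a, b]

@[simp] theorem b_ne_a (i j : ℕ) : (b i : Fin k ⊕ Fin k) ≠ a j := (a_ne_b j i).symm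

theorem a_inj {i j : ℕ} (hi : i < k) (hj : j < k) : (a i : Fin k ⊕ Fin k) = a j ↔ i = j := by
  simp [a, Fin.ext_iff, Nat.mod_eq_of_lt hi, Nat.mod_eq_of_lt hj]

theorem b_inj {i j : ℕ} (hi : i < k) (hj : j < k) : (b i : Fin k ⊕ Fin k) = b j ↔ i = j := by
  simp [b, Fin.ext_iff, Nat.mod_eq_of_lt hi, Nat.mod_eq_of_lt hj]

@[simp] theorem idx_a {i : ℕ} (hi : i < k) : idx (a i : Fin k ⊕ Fin k) = i := by
  simp [idx, a, Nat.mod_eq_of_lt hi]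

@[simp] theorem idx_b {i : ℕ} (hi : i < k) : idx (b i : Fin k ⊕ Fin k) = i := by
  simp [idx, b, Nat.mod_eq_of_lt hi]

theorem adj_a_b (i : ℕ) : (Gk k).Adj (a i) (b i) := by simp [a, b]

theorem adj_a_a {i : ℕ} (hi : i + 1 < k) : (Gk k).Adj (a i) (a (i + 1)) := by
  rw [a, a, adj_inl_inl, Fin.val_cast_of_lt hi, Fin.val_cast_of_lt (Nat.lt_of_succ_lt hi)]
  omega

theorem pendant_boundary (m : ℕ) (x y : Fin k ⊕ Fin k) (h : (Gk k).Adj x y)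
    (hx : x ∈ ({b m} : Set _)) (_ : y ∉ ({b m} : Set _)) : s(x, y) = s(a m, b m) := by
  rw [Set.mem_singleton_iff] at hx
  subst hx
  rcases y with j | j <;> simp only [b, adj_inr_inl, not_adj_inr_inr] at h
  rw [← h, Sym2.eq_swap]
  rfl

theorem spine_boundary (j : ℕ) (x y : Fin k ⊕ Fin k) (h : (Gk k).Adj x y)
    (hx : x ∈ {v | idx v ≤ j}) (hy : y ∉ {v | idx v ≤ j}) : s(x, y) = s(a j, a (j + 1)) := by
  simp only [Set.mem_ofPred_eq, not_le] at hx hy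
  rcases x with x | x <;> rcases y with y | y <;>
    simp only [adj_inl_inl, adj_inl_inr, adj_inr_inl, not_adj_inr_inr, idx, Sum.elim_inl,
      Sum.elim_inr] at h hx hy
  · have hx : (x : ℕ) = j := by omega
    have hy : (y : ℕ) = x + 1 := by omega
    rw [← hx, ← hy, a_val, a_val]
  · subst h; omega
  · subst h; omega

end Gk

namespace Hk

open Fin.NatCast Gk

variable {k : ℕ}

@[simp] theorem adj_inr_inr {i j : Fin k} :
    (Hk k).Adj (.inr i) (.inr j) ↔ (j : ℕ) = i + 1 ∨ (i : ℕ) = j + 1 := by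
  simp only [Hk, SimpleGraph.fromEdgeSet_adj, Set.mem_union, Set.mem_ofPred_eq, Sym2.eq,
    Sym2.rel_iff', Prod.mk.injEq, Sum.inr.injEq, Fin.ext_iff, Prod.swap_prod_mk, reduceCtorEq,
    and_false, false_and, or_self, exists_false, or_false, ne_eq]
  constructor
  · rintro ⟨⟨i', j', h, hc⟩, -⟩; omega
  · rintro (h | h)
    · exact ⟨⟨i, j, h, .inl ⟨rfl, rfl⟩⟩, by omega⟩
    · exact ⟨⟨j, i, h, .inr ⟨rfl, rfl⟩⟩, by omega⟩

@[simp] theorem adj_inr_inl {i j : Fin k} : (Hk k).Adj (.inr i) (.inl j) ↔ (j : ℕ) = i + 2 := by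
  simp [Hk]

@[simp] theorem adj_inl_inr {i j : Fin k} : (Hk k).Adj (.inl i) (.inr j) ↔ (i : ℕ) = j + 2 :=
  SimpleGraph.adj_comm _ _ _ |>.trans adj_inr_inl

@[simp] theorem not_adj_inl_inl {i j : Fin k} : ¬ (Hk k).Adj (.inl i) (.inl j) := by
  simp [Hk]

variable [NeZero k]

theorem adj_b_b {i : ℕ} (hi : i + 1 < k) : (Hk k).Adj (b i) (b (i + 1)) := by
  rw [b, b, adj_inr_inr, Fin.val_cast_of_lt hi, Fin.val_cast_of_lt (Nat.lt_of_succ_lt hi)]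
  omega

theorem adj_b_a {i : ℕ} (hi : i + 2 < k) : (Hk k).Adj (b i) (a (i + 2)) := by
  simp only [a, b, adj_inr_inl, Fin.val_cast_of_lt hi, Fin.val_cast_of_lt (show i < k by omega)]

theorem exists_eq_of_adj {u v : Fin k ⊕ Fin k} (h : (Hk k).Adj u v) :
    ∃ i, (i + 1 < k ∧ s(u, v) = s(b i, b (i + 1))) ∨
      (i + 2 < k ∧ s(u, v) = s(b i, a (i + 2))) := by
  rcases u with i | i <;> rcases v with j | j <;>
    simp only [not_adj_inl_inl, adj_inl_inr, adj_inr_inl, adj_inr_inr] at h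
  · refine ⟨j, .inr ⟨by omega, ?_⟩⟩
    rw [← h, b_val, a_val, Sym2.eq_swap]
  · refine ⟨i, .inr ⟨by omega, ?_⟩⟩
    rw [← h, b_val, a_val]
  · rcases h with h | h
    · refine ⟨i, .inl ⟨by omega, ?_⟩⟩
      rw [← h, b_val, b_val]
    · refine ⟨j, .inl ⟨by omega, ?_⟩⟩
      rw [← h, b_val, b_val, Sym2.eq_swap]

end Hk

namespace Gk

open Fin.NatCast Finset

variable {k : ℕ}

def level (P : FlowPath (Gk k) (Hk k)) : ℕ := min (idx P.src) (idx P.dst)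

theorem level_eq {P : FlowPath (Gk k) (Hk k)} {x y : Fin k ⊕ Fin k}
    (h : P.demandEdge = s(x, y)) : level P = min (idx x) (idx y) := by
  rcases Sym2.eq_iff.mp h with ⟨hx, hy⟩ | ⟨hx, hy⟩ <;> simp only [level, hx, hy, min_comm]

variable [NeZero k]

theorem demandEdge_eq (P : FlowPath (Gk k) (Hk k)) :
    (level P + 1 < k ∧ P.demandEdge = s(b (level P), b (level P + 1))) ∨
      (level P + 2 < k ∧ P.demandEdge = s(b (level P), a (level P + 2))) := by
  obtain ⟨i, ⟨hi, he⟩ | ⟨hi, he⟩⟩ := Hk.exists_eq_of_adj P.demand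
  · have hl : level P = i := by rw [level_eq he, idx_b (by omega), idx_b hi]; omega
    exact .inl (hl ▸ ⟨hi, he⟩)
  · have hl : level P = i := by rw [level_eq he, idx_b (by omega), idx_a hi]; omega
    exact .inr (hl ▸ ⟨hi, he⟩)

theorem level_add_one_lt (P : FlowPath (Gk k) (Hk k)) : level P + 1 < k := by
  rcases demandEdge_eq P with ⟨h, -⟩ | ⟨h, -⟩ <;> omega

theorem pendant_mem_edges (P : FlowPath (Gk k) (Hk k)) :
    s(a (level P), b (level P)) ∈ P.edges := by
  rcases demandEdge_eq P with ⟨hl, he⟩ | ⟨hl, he⟩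
  · exact P.walk.mem_edges_of_boundary (pendant_boundary _) he rfl
      (by rw [Set.mem_singleton_iff, b_inj hl (Nat.lt_of_succ_lt hl)]; omega)
  · exact P.walk.mem_edges_of_boundary (pendant_boundary _) he rfl (a_ne_b _ _)

theorem spine_mem_edges (P : FlowPath (Gk k) (Hk k)) :
    s(a (level P), a (level P + 1)) ∈ P.edges := by
  have hl : level P < k := Nat.lt_of_succ_lt (level_add_one_lt P)
  rcases demandEdge_eq P with ⟨hl', he⟩ | ⟨hl', he⟩ <;>
    refine P.walk.mem_edges_of_boundary (spine_boundary _) he ?_ ?_ <;> simp [hl, hl']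

theorem pendant_succ_mem_edges_or_spine_succ_mem_edges (P : FlowPath (Gk k) (Hk k)) :
    s(a (level P + 1), b (level P + 1)) ∈ P.edges ∨
      s(a (level P + 1), a (level P + 2)) ∈ P.edges := by
  rcases demandEdge_eq P with ⟨hl, he⟩ | ⟨hl, he⟩
  · exact .inl <| P.walk.mem_edges_of_boundary (pendant_boundary _) (he.trans Sym2.eq_swap) rfl
      (by rw [Set.mem_singleton_iff, b_inj (Nat.lt_of_succ_lt hl) hl]; omega)
  · refine .inr <| P.walk.mem_edges_of_boundary (spine_boundary _) he ?_ ?_ <;>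
      simp [hl, (by omega : level P < k)]

theorem sum_level_add_two_mul_sum_level_succ_le {f : FlowPath (Gk k) (Hk k) → ℝ}
    (hf : MultiflowFeasible (Gk k) (Hk k) (fun _ => 1) f) {i : ℕ} (hi : i + 2 < k) :
    ∑ P with level P = i, f P + 2 * ∑ P with level P = i + 1, f P ≤ 2 := by
  set X : Finset (FlowPath (Gk k) (Hk k)) := {P | s(a (i + 1), b (i + 1)) ∈ P.edges}
  set Y : Finset (FlowPath (Gk k) (Hk k)) := {P | s(a (i + 1), a (i + 2)) ∈ P.edges}
  have hX : ∑ P ∈ X, f P ≤ 1 := hf.sum_le ((Gk k).mem_edgeSet.mpr (adj_a_b (i + 1)))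
    (by simp [X])
  have hY : ∑ P ∈ Y, f P ≤ 1 := hf.sum_le ((Gk k).mem_edgeSet.mpr (adj_a_a hi)) (by simp [Y])
  have hlevel : ∀ P ∈ ({P | level P = i} : Finset _), P ∈ X ∪ Y := fun P hP => by
    simp only [mem_filter, mem_univ, true_and, mem_union, X, Y] at hP ⊢
    exact hP ▸ pendant_succ_mem_edges_or_spine_succ_mem_edges P
  have hlevel_succ : ∀ P ∈ ({P | level P = i + 1} : Finset _), P ∈ X ∩ Y := fun P hP => by
    simp only [mem_filter, mem_univ, true_and, mem_inter, X, Y] at hP ⊢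
    have hpendant := pendant_mem_edges P
    have hspine := spine_mem_edges P
    rw [hP] at hpendant hspine
    exact ⟨hpendant, hspine⟩
  have := sum_add_two_nsmul_sum_le (fun P _ => hf.1 P)
    (disjoint_filter.mpr fun _ _ _ => by omega) hlevel hlevel_succ
  rw [two_nsmul] at this
  linarith

theorem multiflowValue_le {f : FlowPath (Gk k) (Hk k) → ℝ}
    (hf : MultiflowFeasible (Gk k) (Hk k) (fun _ => 1) f) (hhalf : IsHalfIntegerFlow f) :
    multiflowValue f ≤ k / 2 := by
  have hvalue : multiflowValue f = ∑ i ∈ range (k - 1), ∑ P with level P = i, f P := by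
    rw [multiflowValue_eq_sum, sum_fiberwise_of_maps_to]
    intro P _
    have := level_add_one_lt P
    rw [mem_range]
    omega
  have hspine (i : ℕ) (hi : i + 1 < k) : ∑ P with level P = i, f P ≤ 1 :=
    hf.sum_le ((Gk k).mem_edgeSet.mpr (adj_a_a hi)) fun P hP => by
      rw [← (mem_filter.mp hP).2]
      exact spine_mem_edges P
  calc multiflowValue f = ∑ i ∈ range (k - 1), ∑ P with level P = i, f P := hvalue
    _ ≤ ((k - 1 : ℕ) + 1) / 2 :=
      sum_range_le_of_isHalfInteger _ _ (fun _ => hhalf.exists_sum_eq _)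
        (fun i hi => hspine i (by omega))
        (fun i hi => sum_level_add_two_mul_sum_level_succ_le hf (by omega))
    _ = k / 2 := by rw [Nat.cast_sub NeZero.one_le]; ring

def bbPath {i : ℕ} (hi : i + 1 < k) : FlowPath (Gk k) (Hk k) where
  src := b i
  dst := b (i + 1)
  demand := Hk.adj_b_b hi
  walk := .cons (adj_a_b i).symm (.cons (adj_a_a hi) (.cons (adj_a_b (i + 1)) .nil))
  isPath := by simp [SimpleGraph.Walk.isPath_def, a_inj, b_inj, hi, Nat.lt_of_succ_lt hi]

def shortcutPath (hk : 2 < k) : FlowPath (Gk k) (Hk k) where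
  src := b 0
  dst := a 2
  demand := Hk.adj_b_a hk
  walk := .cons (adj_a_b 0).symm (.cons (adj_a_a (by omega)) (.cons (adj_a_a hk) .nil))
  isPath := by
    simp [SimpleGraph.Walk.isPath_def, a_inj, hk, (by omega : 0 < k), (by omega : 1 < k)]

def chosenPath (hk : 2 < k) : Fin k → FlowPath (Gk k) (Hk k)
  | ⟨0, _⟩ => shortcutPath hk
  | ⟨_ + 1, hi⟩ => bbPath hi

-- The edges of `chosenPath i` carry labels `0, 1, 3` if `i = 0` and `2i - 2, 2i - 1, 2i`
-- otherwise, so no label occurs on three of these paths.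
def label (e : Sym2 (Fin k ⊕ Fin k)) : ℕ :=
  Sym2.lift ⟨fun u v => idx u + idx v, fun _ _ => add_comm _ _⟩ e

theorem label_of_mem_chosenPath (hk : 2 < k) {i : Fin k} {e : Sym2 (Fin k ⊕ Fin k)}
    (he : e ∈ (chosenPath hk i).edges) :
    (i : ℕ) = 0 ∧ (label e = 0 ∨ label e = 1 ∨ label e = 3) ∨
      2 * (i : ℕ) ≤ label e + 2 ∧ label e ≤ 2 * i := by
  obtain ⟨_ | j, hj⟩ := i
  · simp only [chosenPath, shortcutPath, FlowPath.edges, SimpleGraph.Walk.edges_cons,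
      SimpleGraph.Walk.edges_nil, Set.mem_ofPred_eq, List.mem_cons, List.not_mem_nil,
      or_false] at he
    rcases he with rfl | rfl | rfl <;>
      simp [label, hk, (by omega : 0 < k), (by omega : 1 < k)]
  · simp only [chosenPath, bbPath, FlowPath.edges, SimpleGraph.Walk.edges_cons,
      SimpleGraph.Walk.edges_nil, Set.mem_ofPred_eq, List.mem_cons, List.not_mem_nil,
      or_false] at he
    rcases he with rfl | rfl | rfl <;>
      simp only [label, Sym2.lift_mk, idx_a, idx_b, hj, (by omega : j < k)] <;> omega

theorem card_mem_chosenPath_le_two (hk : 2 < k) (e : Sym2 (Fin k ⊕ Fin k)) :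
    #{i | e ∈ (chosenPath hk i).edges} ≤ 2 := by
  by_contra! h
  obtain ⟨i, hi, j, hj, l, hl, hij, hil, hjl⟩ := two_lt_card.mp h
  simp only [mem_filter, mem_univ, true_and] at hi hj hl
  have := label_of_mem_chosenPath hk hi
  have := label_of_mem_chosenPath hk hj
  have := label_of_mem_chosenPath hk hl
  rw [Ne, Fin.ext_iff] at hij hil hjl
  omega

theorem exists_halfInteger_flow (hk : 2 < k) :
    ∃ f : FlowPath (Gk k) (Hk k) → ℝ, MultiflowFeasible (Gk k) (Hk k) (fun _ => 1) f ∧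
      IsHalfIntegerFlow f ∧ multiflowValue f = k / 2 := by
  refine ⟨multiflowOfPaths (1 / 2) (chosenPath hk), ?_,
    fun P => ⟨#{i | chosenPath hk i = P}, ?_⟩, ?_⟩
  · refine multiflowFeasible_multiflowOfPaths (by norm_num) fun e _ => ?_
    have : (#{i | e ∈ (chosenPath hk i).edges} : ℝ) ≤ 2 := by
      exact_mod_cast card_mem_chosenPath_le_two hk e
    linarith
  · simp [multiflowOfPaths, div_eq_inv_mul]
  · simp [multiflowValue_multiflowOfPaths, div_eq_inv_mul]

end Gk

/-- For every `k ≥ 3` the maximum value of a feasible half-integer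
multiflow on `(G_k, H_k)` with unit capacities is exactly `k/2`. -/
theorem max_half_integer_multiflow_Gk (k : ℕ) (hk : 3 ≤ k) :
    IsGreatest {x : ℝ | ∃ f : FlowPath (Gk k) (Hk k) → ℝ,
        MultiflowFeasible (Gk k) (Hk k) (fun _ => 1) f ∧ IsHalfIntegerFlow f ∧
          x = multiflowValue f}
      ((k : ℝ) / 2) := by
  have : NeZero k := ⟨by omega⟩
  obtain ⟨f, hf, hhalf, hvalue⟩ := Gk.exists_halfInteger_flow (k := k) hk
  refine ⟨⟨f, hf, hhalf, hvalue.symm⟩, ?_⟩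
  rintro _ ⟨g, hg, hghalf, rfl⟩
  exact Gk.multiflowValue_le hg hghalf
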